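/- arXiv:0805.3484 — 4 statements merged into one kernel-verified Lean document; each statement's English description precedes it below -/
import Mathlib

section
/- Let (A,B,C,E) be the CCF of a minimal encoder G of an (n,k,δ) convolutional code with r positive Forney indices, and set Δ = {(X,Y) ∈ F^δ × F^δ : Y = XA + uB for some u ∈ F^k}. Then the orthogonal of Δ in F^δ × F^δ ≅ F^{2δ} with respect to the standard bilinear form is Δ^⊥ = {(X A^T, −X A^T A) : X ∈ F^δ}. -/
/-!
A pair `(p, q)` is orthogonal to every transition `(X, XA + uB)` iff `p = -Aq` and `Bq = 0`.
In the controller canonical form every state is either the shift `XA` of its predecessor or the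
input slot `uB` of its row, which is the pair of identities `AᵀA + BᵀB = 1` and `BAᵀ = 0`.
Hence `Bq = 0` iff `q = AᵀAq`, while `AAᵀA = A`, so the orthogonal pairs are exactly
`(AX, -AᵀAX) = (X Aᵀ, -X Aᵀ A)`, with `X = -q`.
-/

open Polynomial Matrix
open scoped Classical

noncomputable section

namespace ConvCode

variable (F : Type) [Field F] [Fintype F]

/-- Hamming weight of a vector. -/
def wt {n : ℕ} (a : Fin n → F) : ℕ := (Finset.univ.filter fun j => a j ≠ 0).card

/-- Weight enumerator of a set of vectors in `F^n`, as a polynomial in `ℂ[W]`. -/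
def weSet {n : ℕ} (S : Set (Fin n → F)) : Polynomial ℂ :=
  ∑ a ∈ (Set.toFinite S).toFinset, (Polynomial.X : Polynomial ℂ) ^ wt F a

/-- The `i`-th row degree of a polynomial matrix. -/
def rowDeg {k n : ℕ} (G : Matrix (Fin k) (Fin n) (Polynomial F)) (i : Fin k) : ℕ :=
  Finset.univ.sup fun j => (G i j).natDegree

/-- `G` is basic: it has a polynomial right inverse. -/
def IsBasic {k n : ℕ} (G : Matrix (Fin k) (Fin n) (Polynomial F)) : Prop :=
  ∃ H : Matrix (Fin n) (Fin k) (Polynomial F), G * H = 1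

/-- The degree of the code: maximal degree of the `k × k` minors of `G`. -/
def codeDeg {k n : ℕ} (G : Matrix (Fin k) (Fin n) (Polynomial F)) : ℕ :=
  Finset.univ.sup fun f : Fin k ↪ Fin n => ((G.submatrix id f).det).natDegree

/-- A minimal (basic) encoder: the sum of the row degrees equals the degree of the code. -/
def IsMinimalEncoder {k n : ℕ} (G : Matrix (Fin k) (Fin n) (Polynomial F)) : Prop :=
  IsBasic F G ∧ ∑ i, rowDeg F G i = codeDeg F G

/-- The convolutional code generated by the encoder `G`. -/
def code {k n : ℕ} (G : Matrix (Fin k) (Fin n) (Polynomial F)) : Set (Fin n → Polynomial F) :=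
  Set.range fun u : Fin k → Polynomial F => u ᵥ* G

/-- The (module-theoretic) dual of a convolutional code. -/
def dualCode {n : ℕ} (𝓒 : Set (Fin n → Polynomial F)) : Set (Fin n → Polynomial F) :=
  {w | ∀ v ∈ 𝓒, w ⬝ᵥ v = 0}

/-- The sequence-space pairing `⟨⟨v,w⟩⟩ = ∑_t v_t w_tᵀ`. -/
def seqPair {n : ℕ} (v w : Fin n → Polynomial F) : F :=
  ∑ j, ∑ t ∈ Finset.range ((v j).natDegree + 1), (v j).coeff t * (w j).coeff t

/-- The sequence space dual of a convolutional code. -/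
def seqDual {n : ℕ} (𝓒 : Set (Fin n → Polynomial F)) : Set (Fin n → Polynomial F) :=
  {w | ∀ v ∈ 𝓒, ∀ l : ℕ, seqPair F v (fun j => Polynomial.X ^ l * w j) = 0}

/-- Index set of the state space of the controller canonical form:
a state index is a pair `(i, ν)` with `i` a row index and `ν < δ_i`. -/
abbrev StateIdx (k : ℕ) (d : Fin k → ℕ) : Type := (i : Fin k) × Fin (d i)

/-- The state-transition matrix `A` of the controller canonical form. -/
def ccfA {k : ℕ} (d : Fin k → ℕ) : Matrix (StateIdx k d) (StateIdx k d) F :=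
  Matrix.of fun s t => if s.1 = t.1 ∧ (s.2 : ℕ) + 1 = (t.2 : ℕ) then 1 else 0

/-- The input-to-state matrix `B` of the controller canonical form. -/
def ccfB {k : ℕ} (d : Fin k → ℕ) : Matrix (Fin k) (StateIdx k d) F :=
  Matrix.of fun i t => if t.1 = i ∧ (t.2 : ℕ) = 0 then 1 else 0

/-- The state-to-output matrix `C` of the controller canonical form. -/
def ccfC {k n : ℕ} (d : Fin k → ℕ) (G : Matrix (Fin k) (Fin n) (Polynomial F)) :
    Matrix (StateIdx k d) (Fin n) F :=
  Matrix.of fun s j => (G s.1 j).coeff ((s.2 : ℕ) + 1)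

/-- The matrix `E = G(0)` of the controller canonical form. -/
def ccfE {k n : ℕ} (G : Matrix (Fin k) (Fin n) (Polynomial F)) : Matrix (Fin k) (Fin n) F :=
  Matrix.of fun i j => (G i j).coeff 0

/-- The state index set of the controller canonical form of `G`. -/
abbrev States {k n : ℕ} (G : Matrix (Fin k) (Fin n) (Polynomial F)) : Type :=
  StateIdx k (rowDeg F G)

def matA {k n : ℕ} (G : Matrix (Fin k) (Fin n) (Polynomial F)) :
    Matrix (States F G) (States F G) F := ccfA F (rowDeg F G)

def matB {k n : ℕ} (G : Matrix (Fin k) (Fin n) (Polynomial F)) :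
    Matrix (Fin k) (States F G) F := ccfB F (rowDeg F G)

def matC {k n : ℕ} (G : Matrix (Fin k) (Fin n) (Polynomial F)) :
    Matrix (States F G) (Fin n) F := ccfC F (rowDeg F G) G

def matE {k n : ℕ} (G : Matrix (Fin k) (Fin n) (Polynomial F)) :
    Matrix (Fin k) (Fin n) F := ccfE F G

/-- The weight adjacency matrix of a state space realization `(A,B,C,E)`. -/
def WAM {σ : Type} [Fintype σ] {k n : ℕ} (A : Matrix σ σ F) (B : Matrix (Fin k) σ F)
    (C : Matrix σ (Fin n) F) (E : Matrix (Fin k) (Fin n) F) :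
    Matrix (σ → F) (σ → F) (Polynomial ℂ) :=
  Matrix.of fun X Y =>
    weSet F {v | ∃ u : Fin k → F, Y = X ᵥ* A + u ᵥ* B ∧ v = X ᵥ* C + u ᵥ* E}

/-- The weight adjacency matrix of an encoder `G` (via its controller canonical form). -/
def wam {k n : ℕ} (G : Matrix (Fin k) (Fin n) (Polynomial F)) :
    Matrix (States F G → F) (States F G → F) (Polynomial ℂ) :=
  WAM F (matA F G) (matB F G) (matC F G) (matE F G)

/-- The block code `C_const = 𝓒 ∩ F^n` of constant codewords. -/
def constSet {k n : ℕ} (G : Matrix (Fin k) (Fin n) (Polynomial F)) : Set (Fin n → F) :=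
  {w | (fun j => Polynomial.C (w j)) ∈ code F G}

/-- The block code `C_coeff` of coefficient vectors of codewords. -/
def coeffSet {k n : ℕ} (G : Matrix (Fin k) (Fin n) (Polynomial F)) : Set (Fin n → F) :=
  {w | ∃ v ∈ code F G, ∃ t : ℕ, ∀ j, (v j).coeff t = w j}

/-- The dual of a block code. -/
def blockDual {n : ℕ} (S : Set (Fin n → F)) : Set (Fin n → F) :=
  {w | ∀ v ∈ S, w ⬝ᵥ v = 0}

/-- `Δ`: the set of state pairs `(X,Y)` admitting a transition `Y = XA + uB`. -/
def Delta {k n : ℕ} (G : Matrix (Fin k) (Fin n) (Polynomial F)) :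
    Set ((States F G → F) × (States F G → F)) :=
  {p | ∃ u : Fin k → F, p.2 = p.1 ᵥ* matA F G + u ᵥ* matB F G}

/-- `Δ⁻ = {(0,Y) : Y ∈ im A}`. -/
def DeltaMinus {k n : ℕ} (G : Matrix (Fin k) (Fin n) (Polynomial F)) :
    Set ((States F G → F) × (States F G → F)) :=
  {p | p.1 = 0 ∧ ∃ X : States F G → F, p.2 = X ᵥ* matA F G}

/-- `Ω = {(X,Y) ∈ Δ : XC + Y Bᵀ E ∈ C_const}`. -/
def Omega {k n : ℕ} (G : Matrix (Fin k) (Fin n) (Polynomial F)) :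
    Set ((States F G → F) × (States F G → F)) :=
  {p | p ∈ Delta F G ∧
    p.1 ᵥ* matC F G + (p.2 ᵥ* (matB F G)ᵀ) ᵥ* matE F G ∈ constSet F G}

/-- Orthogonal of a set of state pairs with respect to the standard bilinear form on `F^{2δ}`. -/
def pairPerp {σ : Type} [Fintype σ] (S : Set ((σ → F) × (σ → F))) :
    Set ((σ → F) × (σ → F)) :=
  {p | ∀ s ∈ S, p.1 ⬝ᵥ s.1 + p.2 ⬝ᵥ s.2 = 0}

/-- `S_0 = Bᵀ E` and `S_i = Bᵀ B A^{i-1} C` for `i ≥ 1`. -/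
def Smat {k n : ℕ} (d : Fin k → ℕ) (G : Matrix (Fin k) (Fin n) (Polynomial F)) :
    ℕ → Matrix (StateIdx k d) (Fin n) F
  | 0 => (ccfB F d)ᵀ * ccfE F G
  | (i + 1) => (ccfB F d)ᵀ * ccfB F d * ccfA F d ^ i * ccfC F d G

def Sm {k n : ℕ} (G : Matrix (Fin k) (Fin n) (Polynomial F)) :
    ℕ → Matrix (States F G) (Fin n) F := Smat F (rowDeg F G) G

/-- The matrix `N = ∑_{m≥2} ∑_{i=1}^{m-1} ∑_{j=0}^{i-1} (Âᵀ)^{i-1} Ŝ_j S_{m-j}ᵀ A^{m-(i+1)}`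
(all summands with `m ≥ δ + δ̂` vanish, so the sum is truncated there). -/
def Nm {k kb n : ℕ} (G : Matrix (Fin k) (Fin n) (Polynomial F))
    (Gh : Matrix (Fin kb) (Fin n) (Polynomial F)) :
    Matrix (States F Gh) (States F G) F :=
  ∑ m ∈ Finset.Icc 2 (Fintype.card (States F G) + Fintype.card (States F Gh)),
    ∑ i ∈ Finset.Icc 1 (m - 1), ∑ j ∈ Finset.range i,
      (matA F Gh)ᵀ ^ (i - 1) * Sm F Gh j * (Sm F G (m - j))ᵀ * matA F G ^ (m - (i + 1))

/-- The reciprocal matrix `G' = diag(D^{δ_1},…,D^{δ_k}) · G(D⁻¹)`. -/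
def recip {k n : ℕ} (G : Matrix (Fin k) (Fin n) (Polynomial F)) :
    Matrix (Fin k) (Fin n) (Polynomial F) :=
  Matrix.of fun i j => (G i j).reflect (rowDeg F G i)

/-- The block diagonal matrix `R` whose blocks are the anti-identity matrices. -/
def Rmat {k : ℕ} (d : Fin k → ℕ) : Matrix (StateIdx k d) (StateIdx k d) F :=
  Matrix.of fun s t => if s.1 = t.1 ∧ (s.2 : ℕ) + (t.2 : ℕ) + 1 = d s.1 then 1 else 0

/-- The MacWilliams matrix `𝓗 = q^{-δ/2} (ζ^{τ(X Yᵀ)})_{X,Y}`. -/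
def macH (σ : Type) [Fintype σ] (p : ℕ) [Algebra (ZMod p) F] (ζ : ℂ) :
    Matrix (σ → F) (σ → F) ℂ :=
  Matrix.of fun X Y =>
    (((Real.sqrt (Fintype.card F) : ℝ) : ℂ))⁻¹ ^ Fintype.card σ *
      ζ ^ (Algebra.trace (ZMod p) F (X ⬝ᵥ Y)).val

/-- The MacWilliams transform `H(f)(W) = (1+(q-1)W)^n f((1-W)/(1+(q-1)W))`
on polynomials of degree at most `n`. -/
def macWT (q n : ℕ) (f : Polynomial ℂ) : Polynomial ℂ :=
  ∑ j ∈ Finset.range (n + 1),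
    Polynomial.C (f.coeff j) * (1 - Polynomial.X) ^ j *
      (1 + Polynomial.C ((q : ℂ) - 1) * Polynomial.X) ^ (n - j)

end ConvCode

namespace ConvCode

section Orthogonality

variable {R σ ι : Type*} [CommRing R] [Fintype σ] [Fintype ι]

theorem transition_orthogonal_iff (A : Matrix σ σ R) (B : Matrix ι σ R) (p q : σ → R) :
    (∀ X u, p ⬝ᵥ X + q ⬝ᵥ (X ᵥ* A + u ᵥ* B) = 0) ↔ p + A *ᵥ q = 0 ∧ B *ᵥ q = 0 := by
  have expand : ∀ X u,
      p ⬝ᵥ X + q ⬝ᵥ (X ᵥ* A + u ᵥ* B) = (p + A *ᵥ q) ⬝ᵥ X + (B *ᵥ q) ⬝ᵥ u := by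
    intro X u
    rw [dotProduct_add, add_dotProduct, dotProduct_comm q, dotProduct_comm q,
      ← dotProduct_mulVec, ← dotProduct_mulVec, dotProduct_comm X, dotProduct_comm u, add_assoc]
  simp only [expand]
  refine ⟨fun h => ⟨dotProduct_eq_zero _ fun X => ?_, dotProduct_eq_zero _ fun u => ?_⟩, ?_⟩
  · simpa using h X 0
  · simpa using h 0 u
  · rintro ⟨hp, hq⟩ X u
    simp [hp, hq]

theorem exists_eq_vecMul_transpose_iff [DecidableEq σ] (A : Matrix σ σ R) (B : Matrix ι σ R)
    (hid : Aᵀ * A + Bᵀ * B = 1) (horth : B * Aᵀ = 0) (p q : σ → R) :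
    (∃ X, (p, q) = (X ᵥ* Aᵀ, -((X ᵥ* Aᵀ) ᵥ* A))) ↔ p + A *ᵥ q = 0 ∧ B *ᵥ q = 0 := by
  have hAtA : Aᵀ * A = 1 - Bᵀ * B := eq_sub_of_add_eq hid
  simp only [← mulVec_transpose, transpose_transpose, mulVec_mulVec, Prod.mk.injEq]
  constructor
  · rintro ⟨X, rfl, rfl⟩
    have hAAtA : A * (Aᵀ * A) = A := by
      rw [hAtA, Matrix.mul_sub, Matrix.mul_one, ← Matrix.mul_assoc, ← transpose_transpose A,
        ← transpose_mul, transpose_transpose, horth, transpose_zero, Matrix.zero_mul, sub_zero]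
    refine ⟨?_, ?_⟩
    · rw [mulVec_neg, mulVec_mulVec, hAAtA, add_neg_cancel]
    · rw [mulVec_neg, mulVec_mulVec, ← Matrix.mul_assoc, horth, Matrix.zero_mul, zero_mulVec,
        neg_zero]
  · rintro ⟨hp, hq⟩
    refine ⟨-q, ?_, ?_⟩
    · rw [mulVec_neg]
      exact eq_neg_of_add_eq_zero_left hp
    · rw [mulVec_neg, neg_neg, hAtA, sub_mulVec, ← mulVec_mulVec, hq, mulVec_zero, one_mulVec,
        sub_zero]

end Orthogonality

theorem pairPerp_transitions_eq {F : Type} [Field F] {σ : Type} [Fintype σ] [DecidableEq σ]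
    {ι : Type*} [Fintype ι] (A : Matrix σ σ F) (B : Matrix ι σ F)
    (hid : Aᵀ * A + Bᵀ * B = 1) (horth : B * Aᵀ = 0) :
    pairPerp F {s | ∃ u : ι → F, s.2 = s.1 ᵥ* A + u ᵥ* B} =
      {pq | ∃ X, pq = (X ᵥ* Aᵀ, -((X ᵥ* Aᵀ) ᵥ* A))} := by
  ext ⟨p, q⟩
  rw [Set.mem_ofPred_eq, exists_eq_vecMul_transpose_iff A B hid horth,
    ← transition_orthogonal_iff]
  exact ⟨fun h X u => h (X, _) ⟨u, rfl⟩, fun h ⟨X, _⟩ ⟨u, hu⟩ => hu ▸ h X u⟩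

section ControllerCanonicalForm

variable (F : Type) [Field F] {k : ℕ} (d : Fin k → ℕ)

theorem stateIdx_ext_iff {s t : StateIdx k d} : s = t ↔ s.1 = t.1 ∧ (s.2 : ℕ) = t.2 := by
  obtain ⟨i, ν⟩ := s
  obtain ⟨j, μ⟩ := t
  simp only [Sigma.mk.injEq]
  exact and_congr_right fun h => Fin.heq_ext_iff (congrArg d h)

theorem ccfB_mul_ccfA_transpose : ccfB F d * (ccfA F d)ᵀ = 0 := by
  ext i s
  refine Finset.sum_eq_zero fun t _ => ?_
  simp only [ccfA, ccfB, transpose_apply, of_apply]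
  split_ifs <;> first | omega | simp

theorem ccfA_transpose_mul_add_ccfB_transpose_mul :
    (ccfA F d)ᵀ * ccfA F d + (ccfB F d)ᵀ * ccfB F d = 1 := by
  ext s t
  simp only [Matrix.add_apply, mul_apply, transpose_apply, ccfA, ccfB, of_apply, one_apply,
    stateIdx_ext_iff]
  obtain ⟨i, ⟨_ | m, hm⟩⟩ := s
  · rw [Finset.sum_eq_zero fun j _ => by simp, zero_add]
    simp only [ite_mul, one_mul, zero_mul, and_true, Finset.sum_ite_eq, Finset.mem_univ, if_true]
    exact if_congr (and_congr eq_comm eq_comm) rfl rfl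
  · rw [Finset.sum_eq_single ⟨i, ⟨m, by omega⟩⟩, Finset.sum_eq_zero fun j _ => by simp]
    · simp [eq_comm]
    · rintro ⟨j, μ⟩ - hne
      rw [if_neg, zero_mul]
      rintro ⟨rfl, h⟩
      exact hne ((stateIdx_ext_iff d).2 ⟨rfl, by simp only at h ⊢; omega⟩)
    · simp

end ControllerCanonicalForm

end ConvCode

theorem statement4_general {F : Type} [Field F]
    (k n : ℕ) (G : Matrix (Fin k) (Fin n) (Polynomial F)) :
    ConvCode.pairPerp F (ConvCode.Delta F G) =
      {pq | ∃ X : ConvCode.States F G → F,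
        pq = (X ᵥ* (ConvCode.matA F G)ᵀ,
              -((X ᵥ* (ConvCode.matA F G)ᵀ) ᵥ* ConvCode.matA F G))} :=
  ConvCode.pairPerp_transitions_eq _ _
    (ConvCode.ccfA_transpose_mul_add_ccfB_transpose_mul F _) (ConvCode.ccfB_mul_ccfA_transpose F _)

/-- Proposition 4.4(b): `Δ^⊥ = {(X Aᵀ, −X Aᵀ A) : X ∈ F^δ}`. -/
theorem statement4 {F : Type} [Field F] [Fintype F]
    (k n : ℕ) (G : Matrix (Fin k) (Fin n) (Polynomial F))
    (hG : ConvCode.IsMinimalEncoder F G) :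
    ConvCode.pairPerp F (ConvCode.Delta F G) =
      {pq | ∃ X : ConvCode.States F G → F,
        pq = (X ᵥ* (ConvCode.matA F G)ᵀ,
              -((X ᵥ* (ConvCode.matA F G)ᵀ) ᵥ* ConvCode.matA F G))} :=
  statement4_general k n G
end
end

section
/- Let (A,B,C,E) be the CCF of a minimal encoder G of an (n,k,δ) convolutional code, set 𝓕 = F^δ × F^δ, Δ = {(X,Y) ∈ 𝓕 : Y = XA + uB for some u ∈ F^k}, and Δ⁻ = {(0,Y) : Y ∈ im A}. Then 𝓕 = Δ ⊕ Δ⁻ (direct sum of subspaces). -/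
/-!
`Δ` is the image of `(X, u) ↦ (X, XA + uB)` and `Δ⁻ = 0 × im A`, so `𝓕 = Δ ⊕ Δ⁻` as soon as
`F^δ = im A ⊕ im B`: write `(X, Y) = (X, XA + uB) + (0, X'A)` with `Y - XA = X'A + uB`.
In the controller canonical form `A` shifts every chain of states `(i, 0), …, (i, δ_i - 1)` by one
place and `B` feeds input `i` into the head `(i, 0)`, so `im A` is the set of states vanishing at
all heads and `im B` the set of states supported on them.
-/

open Polynomial Matrix
open scoped Classical

noncomputable section

namespace Matrix

open Submodule

variable {R σ ι : Type*} [CommRing R] [Fintype σ] [Fintype ι] {A : Matrix σ σ R}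
  {B : Matrix ι σ R}

theorem disjoint_span_transitions
    (hAB : Disjoint (LinearMap.range A.vecMulLinear) (LinearMap.range B.vecMulLinear)) :
    Disjoint (span R {p : (σ → R) × (σ → R) | ∃ u, p.2 = p.1 ᵥ* A + u ᵥ* B})
      (span R {p : (σ → R) × (σ → R) | p.1 = 0 ∧ ∃ X, p.2 = X ᵥ* A}) := by
  have hΔ : span R {p : (σ → R) × (σ → R) | ∃ u, p.2 = p.1 ᵥ* A + u ᵥ* B} ≤
      (LinearMap.range B.vecMulLinear).comap
        (LinearMap.snd R _ _ - A.vecMulLinear ∘ₗ LinearMap.fst R _ _) :=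
    span_le.mpr fun p ⟨u, hu⟩ => ⟨u, by simp [hu]⟩
  have hΔm : span R {p : (σ → R) × (σ → R) | p.1 = 0 ∧ ∃ X, p.2 = X ᵥ* A} ≤
      LinearMap.ker (LinearMap.fst R _ _) ⊓
        (LinearMap.range A.vecMulLinear).comap (LinearMap.snd R _ _) :=
    span_le.mpr fun p ⟨hp, X, hX⟩ => ⟨hp, X, hX.symm⟩
  rw [disjoint_def]
  rintro ⟨X, Y⟩ hΔp hΔmp
  obtain ⟨hX, hYA⟩ := hΔm hΔmp
  replace hX : X = 0 := hX
  subst hX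
  have hY : Y = 0 := disjoint_def.mp hAB Y hYA (by simpa using hΔ hΔp)
  rw [hY]
  rfl

theorem codisjoint_span_transitions
    (hAB : Codisjoint (LinearMap.range A.vecMulLinear) (LinearMap.range B.vecMulLinear)) :
    Codisjoint (span R {p : (σ → R) × (σ → R) | ∃ u, p.2 = p.1 ᵥ* A + u ᵥ* B})
      (span R {p : (σ → R) × (σ → R) | p.1 = 0 ∧ ∃ X, p.2 = X ᵥ* A}) := by
  rw [codisjoint_iff, eq_top_iff']
  rintro ⟨X, Y⟩
  obtain ⟨_, ⟨X', rfl⟩, _, ⟨u, rfl⟩, hsum⟩ :=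
    mem_sup.mp (hAB.eq_top ▸ mem_top : Y - X ᵥ* A ∈ _)
  have hsplit : ((X, Y) : (σ → R) × (σ → R)) = (X, X ᵥ* A + u ᵥ* B) + (0, X' ᵥ* A) := by
    simp only [coe_vecMulLinear, eq_sub_iff_add_eq] at hsum
    ext1
    · simp
    · simp only [Prod.snd_add, ← hsum]
      abel
  rw [hsplit]
  exact add_mem_sup (subset_span ⟨u, rfl⟩) (subset_span ⟨rfl, X', rfl⟩)

theorem isCompl_span_transitions
    (hAB : IsCompl (LinearMap.range A.vecMulLinear) (LinearMap.range B.vecMulLinear)) :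
    IsCompl (span R {p : (σ → R) × (σ → R) | ∃ u, p.2 = p.1 ᵥ* A + u ᵥ* B})
      (span R {p : (σ → R) × (σ → R) | p.1 = 0 ∧ ∃ X, p.2 = X ᵥ* A}) :=
  ⟨disjoint_span_transitions hAB.disjoint, codisjoint_span_transitions hAB.codisjoint⟩

end Matrix

namespace ConvCode

variable {F : Type} [Field F] {k : ℕ} (d : Fin k → ℕ)

@[simp]
lemma vecMul_ccfA_apply_zero (X : StateIdx k d → F) (i : Fin k) (h : 0 < d i) :
    (X ᵥ* ccfA F d) ⟨i, ⟨0, h⟩⟩ = 0 := by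
  simp [Matrix.vecMul, dotProduct, ccfA]

@[simp]
lemma vecMul_ccfA_apply_succ (X : StateIdx k d → F) (i : Fin k) {ν : ℕ} (h : ν + 1 < d i) :
    (X ᵥ* ccfA F d) ⟨i, ⟨ν + 1, h⟩⟩ = X ⟨i, ⟨ν, by omega⟩⟩ := by
  simp only [Matrix.vecMul, dotProduct, ccfA, Matrix.of_apply, mul_ite, mul_one, mul_zero]
  rw [Fintype.sum_eq_single ⟨i, ⟨ν, by omega⟩⟩]
  · simp
  · rintro ⟨j, μ⟩ hne
    rw [if_neg]
    rintro ⟨rfl, hμ⟩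
    exact hne (by simp only [Sigma.mk.injEq, heq_eq_eq, true_and]; ext; simpa using hμ)

@[simp]
lemma vecMul_ccfB_apply_zero (u : Fin k → F) (i : Fin k) (h : 0 < d i) :
    (u ᵥ* ccfB F d) ⟨i, ⟨0, h⟩⟩ = u i := by
  simp [Matrix.vecMul, dotProduct, ccfB]

@[simp]
lemma vecMul_ccfB_apply_succ (u : Fin k → F) (i : Fin k) {ν : ℕ} (h : ν + 1 < d i) :
    (u ᵥ* ccfB F d) ⟨i, ⟨ν + 1, h⟩⟩ = 0 := by
  simp [Matrix.vecMul, dotProduct, ccfB]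

lemma isCompl_range_vecMulLinear_ccfA_ccfB :
    IsCompl (LinearMap.range (ccfA F d).vecMulLinear)
      (LinearMap.range (ccfB F d).vecMulLinear) := by
  constructor
  · rw [Submodule.disjoint_def]
    rintro Y ⟨X, rfl⟩ ⟨u, hu⟩
    simp only [Matrix.coe_vecMulLinear] at hu ⊢
    funext s
    obtain ⟨i, _ | ν, h⟩ := s
    · exact vecMul_ccfA_apply_zero d X i h
    · rw [← hu, vecMul_ccfB_apply_succ, Pi.zero_apply]
  · rw [codisjoint_iff, Submodule.eq_top_iff']
    intro Y
    -- shift the state back along each chain, and feed its head in as the input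
    let X : StateIdx k d → F := fun s => if h : s.2.1 + 1 < d s.1 then Y ⟨s.1, ⟨s.2 + 1, h⟩⟩ else 0
    let u : Fin k → F := fun i => if h : 0 < d i then Y ⟨i, ⟨0, h⟩⟩ else 0
    have hY : Y = X ᵥ* ccfA F d + u ᵥ* ccfB F d := by
      funext s
      obtain ⟨i, _ | ν, h⟩ := s <;> simp [X, u, h]
    rw [hY]
    exact Submodule.add_mem_sup ⟨X, rfl⟩ ⟨u, rfl⟩

end ConvCode

theorem statement5_general {F : Type} [Field F] [Fintype F]
    (k n : ℕ) (G : Matrix (Fin k) (Fin n) (Polynomial F)) :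
    Submodule.span F (ConvCode.Delta F G) ⊔ Submodule.span F (ConvCode.DeltaMinus F G) = ⊤ ∧
    Submodule.span F (ConvCode.Delta F G) ⊓ Submodule.span F (ConvCode.DeltaMinus F G) = ⊥ :=
  have h := Matrix.isCompl_span_transitions
    (ConvCode.isCompl_range_vecMulLinear_ccfA_ccfB (F := F) (ConvCode.rowDeg F G))
  ⟨h.sup_eq_top, h.inf_eq_bot⟩

/-- Proposition 4.4(c): `𝓕 = Δ ⊕ Δ⁻`. -/
theorem statement5 {F : Type} [Field F] [Fintype F]
    (k n : ℕ) (G : Matrix (Fin k) (Fin n) (Polynomial F))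
    (hG : ConvCode.IsMinimalEncoder F G) :
    Submodule.span F (ConvCode.Delta F G) ⊔ Submodule.span F (ConvCode.DeltaMinus F G) = ⊤ ∧
    Submodule.span F (ConvCode.Delta F G) ⊓ Submodule.span F (ConvCode.DeltaMinus F G) = ⊥ :=
  statement5_general k n G
end
end

section
/- Let (A,B,C,E) be the CCF of a minimal encoder G of an (n,k,δ) convolutional code C, and set Δ = {(X,Y) ∈ F^δ × F^δ : Y = XA + uB for some u ∈ F^k}, C_const = C ∩ F^n, and Ω = {(X,Y) ∈ Δ : XC + Y B^T E ∈ C_const}. Then Ω = {(X,Y) ∈ Δ : there exists u ∈ F^k with Y = XA + uB and 0 = XC + uE}. -/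
open Polynomial Matrix
open scoped Classical

noncomputable section

/- A minimal encoder has a full-row-rank matrix of leading row coefficients (a `k × k` minor
of degree `δ > 0` has the corresponding minor of that matrix as leading coefficient; for `δ = 0`
this is `G(0) H(0) = I`), which gives the predictable degree property. Hence a constant codeword
`a G` only uses rows of degree zero, i.e. `C_const = {c E : c vanishes on the rows of positive
degree}`. On the other hand, for a transition `Y = X A + u B` the vector `Y Bᵀ` agrees with `u`
on exactly these rows, so `Y Bᵀ` and `u` differ by such a `c`, and both inclusions follow. -/

theorem Polynomial.coeff_prod_sum_of_natDegree_le {R ι : Type*} [CommSemiring R]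
    (s : Finset ι) (p : ι → R[X]) (d : ι → ℕ) (h : ∀ i ∈ s, (p i).natDegree ≤ d i) :
    (∏ i ∈ s, p i).coeff (∑ i ∈ s, d i) = ∏ i ∈ s, (p i).coeff (d i) := by
  induction s using Finset.cons_induction with
  | empty => simp
  | cons a s _ ih =>
    have hs : ∀ i ∈ s, (p i).natDegree ≤ d i := fun i hi => h i (Finset.mem_cons_of_mem hi)
    rw [Finset.prod_cons, Finset.sum_cons, Finset.prod_cons, ← ih hs,
      coeff_mul_add_eq_of_natDegree_le (h a (Finset.mem_cons_self a s))
        ((natDegree_prod_le s p).trans (Finset.sum_le_sum hs))]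

namespace ConvCode

variable {F : Type} [Field F] {k n : ℕ} (G : Matrix (Fin k) (Fin n) F[X])

theorem natDegree_le_rowDeg (i : Fin k) (j : Fin n) : (G i j).natDegree ≤ rowDeg F G i :=
  Finset.le_sup (f := fun j => (G i j).natDegree) (Finset.mem_univ j)

def rowLeadingCoeff : Matrix (Fin k) (Fin n) F :=
  Matrix.of fun i j => (G i j).coeff (rowDeg F G i)

theorem coeff_det_submatrix_sum_rowDeg (f : Fin k ↪ Fin n) :
    (G.submatrix id f).det.coeff (∑ i, rowDeg F G i) =
      ((rowLeadingCoeff G).submatrix id f).det := by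
  simp only [det_apply, finsetSum_coeff, coeff_smul]
  refine Finset.sum_congr rfl fun σ _ => congrArg _ ?_
  rw [← Equiv.sum_comp σ, Polynomial.coeff_prod_sum_of_natDegree_le]
  · rfl
  · exact fun i _ => natDegree_le_rowDeg G (σ i) (f i)

theorem exists_natDegree_det_submatrix_eq_codeDeg (h : codeDeg F G ≠ 0) :
    ∃ f : Fin k ↪ Fin n, (G.submatrix id f).det.natDegree = codeDeg F G := by
  have hne : (Finset.univ : Finset (Fin k ↪ Fin n)).Nonempty := by
    by_contra hemp
    exact h (by rw [codeDeg, Finset.not_nonempty_iff_eq_empty.mp hemp, Finset.sup_empty]; rfl)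
  obtain ⟨f, -, hf⟩ := Finset.exists_mem_eq_sup _ hne
    fun f : Fin k ↪ Fin n => (G.submatrix id f).det.natDegree
  exact ⟨f, hf.symm⟩

theorem IsBasic.eq_zero_of_vecMul_constantCoeff_eq_zero (hG : IsBasic F G) {b : Fin k → F}
    (hb : b ᵥ* G.map constantCoeff = 0) : b = 0 := by
  obtain ⟨H, hH⟩ := hG
  have hH0 : G.map constantCoeff * H.map constantCoeff = 1 := by
    rw [← Matrix.map_mul, hH, Matrix.map_one _ (map_zero _) (map_one _)]
  calc b = b ᵥ* (G.map constantCoeff * H.map constantCoeff) := by rw [hH0, vecMul_one]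
    _ = 0 := by rw [← vecMul_vecMul, hb, zero_vecMul]

theorem IsMinimalEncoder.eq_zero_of_vecMul_rowLeadingCoeff_eq_zero (hG : IsMinimalEncoder F G)
    {b : Fin k → F} (hb : b ᵥ* rowLeadingCoeff G = 0) : b = 0 := by
  by_cases hδ : ∑ i, rowDeg F G i = 0
  · have hd (i : Fin k) : rowDeg F G i = 0 := Finset.sum_eq_zero_iff.mp hδ i (Finset.mem_univ i)
    have hG0 : G.map constantCoeff = rowLeadingCoeff G := by
      ext i j
      simp [rowLeadingCoeff, hd, constantCoeff_apply]
    exact hG.1.eq_zero_of_vecMul_constantCoeff_eq_zero G (hG0 ▸ hb)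
  · obtain ⟨f, hf⟩ := exists_natDegree_det_submatrix_eq_codeDeg G (hG.2 ▸ hδ)
    rw [← hG.2] at hf
    have hdet : ((rowLeadingCoeff G).submatrix id f).det ≠ 0 := by
      rw [← coeff_det_submatrix_sum_rowDeg, ← hf]
      exact leadingCoeff_ne_zero.mpr fun h0 => hδ (by rw [← hf, h0, natDegree_zero])
    by_contra hb0
    exact hdet (exists_vecMul_eq_zero_iff.mp ⟨b, hb0, funext fun j => congrFun hb (f j)⟩)

/-- The predictable degree property (the inequality `≥`; `≤` is trivial). -/
theorem IsMinimalEncoder.exists_le_natDegree_vecMul (hG : IsMinimalEncoder F G)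
    (a : Fin k → F[X]) {i : Fin k} (hi : a i ≠ 0) :
    ∃ j, (a i).natDegree + rowDeg F G i ≤ ((a ᵥ* G) j).natDegree := by
  obtain ⟨i₀, hi₀, hmax⟩ := Finset.exists_max_image {i | a i ≠ 0}
    (fun i => (a i).natDegree + rowDeg F G i) ⟨i, by simpa using hi⟩
  set N := (a i₀).natDegree + rowDeg F G i₀
  set b : Fin k → F := fun i => (a i).coeff (N - rowDeg F G i)
  have hcoeff : ∀ j, ((a ᵥ* G) j).coeff N = (b ᵥ* rowLeadingCoeff G) j := by
    intro j
    simp only [vecMul, dotProduct, finsetSum_coeff]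
    refine Finset.sum_congr rfl fun i _ => ?_
    by_cases hz : a i = 0
    · simp [hz, b]
    · have hle := hmax i (by simpa using hz)
      rw [show N = (N - rowDeg F G i) + rowDeg F G i by omega,
        coeff_mul_add_eq_of_natDegree_le (by omega) (natDegree_le_rowDeg G i j)]
      rfl
  have hb : b ≠ 0 := fun h => by
    have hi₀ : a i₀ ≠ 0 := by simpa using hi₀
    exact hi₀ (by simpa [b, N] using congrFun h i₀)
  obtain ⟨j, hj⟩ : ∃ j, (b ᵥ* rowLeadingCoeff G) j ≠ 0 := by
    by_contra! h
    exact hb (hG.eq_zero_of_vecMul_rowLeadingCoeff_eq_zero G (funext h))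
  exact ⟨j, (hmax i (by simpa using hi)).trans (le_natDegree_of_ne_zero (hcoeff j ▸ hj))⟩

def constInputs : Submodule F (Fin k → F) where
  carrier := {c | ∀ i, rowDeg F G i ≠ 0 → c i = 0}
  add_mem' ha hb i hi := by simp [ha i hi, hb i hi]
  zero_mem' _ _ := rfl
  smul_mem' a _ hc i hi := by simp [hc i hi]

theorem mem_constInputs {c : Fin k → F} :
    c ∈ constInputs G ↔ ∀ i, rowDeg F G i ≠ 0 → c i = 0 :=
  Iff.rfl

theorem vecMul_matE_mem_constSet {c : Fin k → F} (hc : c ∈ constInputs G) :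
    c ᵥ* matE F G ∈ constSet F G := by
  refine ⟨fun i => C (c i), funext fun j => ?_⟩
  simp only [vecMul, dotProduct, matE, ccfE, of_apply, map_sum, C_mul]
  refine Finset.sum_congr rfl fun i _ => ?_
  by_cases hd : rowDeg F G i = 0
  · rw [← eq_C_of_natDegree_eq_zero (Nat.le_zero.mp ((natDegree_le_rowDeg G i j).trans_eq hd))]
  · simp [(mem_constInputs G).mp hc i hd]

theorem IsMinimalEncoder.mem_constSet_iff (hG : IsMinimalEncoder F G) {w : Fin n → F} :
    w ∈ constSet F G ↔ ∃ c ∈ constInputs G, c ᵥ* matE F G = w := by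
  refine ⟨fun ⟨a, ha⟩ => ?_, fun ⟨c, hc, hw⟩ => hw ▸ vecMul_matE_mem_constSet G hc⟩
  have haG (j : Fin n) : (a ᵥ* G) j = C (w j) := congrFun ha j
  refine ⟨fun i => (a i).coeff 0, (mem_constInputs G).mpr fun i hd => ?_, funext fun j => ?_⟩
  · by_contra hai
    obtain ⟨j, hj⟩ := hG.exists_le_natDegree_vecMul G a (i := i) (fun h => hai (by simp [h]))
    rw [haG, natDegree_C] at hj
    omega
  · rw [← coeff_C_zero (a := w j), ← haG]
    simp only [vecMul, dotProduct, finsetSum_coeff, mul_coeff_zero]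
    rfl

theorem vecMul_matB_apply (u : Fin k → F) (t : States F G) :
    (u ᵥ* matB F G) t = if (t.2 : ℕ) = 0 then u t.1 else 0 := by
  rw [vecMul, dotProduct, Finset.sum_eq_single t.1]
  · by_cases h : (t.2 : ℕ) = 0 <;> simp [matB, ccfB, h]
  · intro i _ hi
    simp [matB, ccfB, Ne.symm hi]
  · simp

theorem vecMul_matB_eq_zero {c : Fin k → F} (hc : c ∈ constInputs G) : c ᵥ* matB F G = 0 := by
  funext t
  rw [vecMul_matB_apply, (mem_constInputs G).mp hc t.1 (by have := t.2.2; omega)]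
  simp

theorem vecMul_transpose_matB_apply (Y : States F G → F) (i : Fin k) :
    (Y ᵥ* (matB F G)ᵀ) i = if h : 0 < rowDeg F G i then Y ⟨i, ⟨0, h⟩⟩ else 0 := by
  split_ifs with h
  · rw [vecMul, dotProduct, Finset.sum_eq_single ⟨i, ⟨0, h⟩⟩]
    · simp [matB, ccfB]
    · rintro ⟨i', ν⟩ _ hne
      have : ¬(i' = i ∧ (ν : ℕ) = 0) := by
        rintro ⟨rfl, hν⟩
        exact hne (congrArg _ (Fin.ext hν))
      simp [matB, ccfB, this]
    · simp
  · refine Finset.sum_eq_zero fun ⟨i', ν⟩ _ => ?_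
    have : ¬(i' = i ∧ (ν : ℕ) = 0) := by
      rintro ⟨rfl, hν⟩
      exact h (hν ▸ ν.2)
    simp [matB, ccfB, this]

theorem vecMul_transpose_matB_sub_mem_constInputs {X Y : States F G → F} {u : Fin k → F}
    (hY : Y = X ᵥ* matA F G + u ᵥ* matB F G) : Y ᵥ* (matB F G)ᵀ - u ∈ constInputs G := by
  refine (mem_constInputs G).mpr fun i hd => ?_
  have hA : (X ᵥ* matA F G) ⟨i, ⟨0, Nat.pos_of_ne_zero hd⟩⟩ = 0 := by
    simp [vecMul, dotProduct, matA, ccfA]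
  simp [vecMul_transpose_matB_apply, Nat.pos_of_ne_zero hd, hY, hA, vecMul_matB_apply]

theorem IsMinimalEncoder.vecMul_add_mem_constSet_iff (hG : IsMinimalEncoder F G)
    {X Y : States F G → F} {u₀ : Fin k → F}
    (hY₀ : Y = X ᵥ* matA F G + u₀ ᵥ* matB F G) :
    X ᵥ* matC F G + (Y ᵥ* (matB F G)ᵀ) ᵥ* matE F G ∈ constSet F G ↔
      ∃ u : Fin k → F,
        Y = X ᵥ* matA F G + u ᵥ* matB F G ∧ 0 = X ᵥ* matC F G + u ᵥ* matE F G := by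
  refine ⟨fun hw => ?_, fun ⟨u, hY, h0⟩ => ?_⟩
  · obtain ⟨c, hc, hcw⟩ := (hG.mem_constSet_iff G).mp hw
    have hc₀ := vecMul_transpose_matB_sub_mem_constInputs G hY₀
    refine ⟨Y ᵥ* (matB F G)ᵀ - c, ?_, by rw [sub_vecMul, hcw]; abel⟩
    calc Y = X ᵥ* matA F G + u₀ ᵥ* matB F G := hY₀
      _ = X ᵥ* matA F G + (Y ᵥ* (matB F G)ᵀ - c) ᵥ* matB F G := by
        rw [show Y ᵥ* (matB F G)ᵀ - c = u₀ + (Y ᵥ* (matB F G)ᵀ - u₀ - c) by abel,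
          add_vecMul, vecMul_matB_eq_zero G (sub_mem hc₀ hc), add_zero]
  · have hc := vecMul_transpose_matB_sub_mem_constInputs G hY
    convert vecMul_matE_mem_constSet G hc using 1
    rw [sub_vecMul]
    linear_combination (norm := module) -h0

end ConvCode

theorem statement7_general {F : Type} [Field F]
    (k n : ℕ) (G : Matrix (Fin k) (Fin n) (Polynomial F))
    (hG : ConvCode.IsMinimalEncoder F G) :
    ConvCode.Omega F G =
      {p | p ∈ ConvCode.Delta F G ∧ ∃ u : Fin k → F,
        p.2 = p.1 ᵥ* ConvCode.matA F G + u ᵥ* ConvCode.matB F G ∧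
        0 = p.1 ᵥ* ConvCode.matC F G + u ᵥ* ConvCode.matE F G} := by
  ext ⟨X, Y⟩
  exact and_congr_right fun ⟨_, hY₀⟩ => hG.vecMul_add_mem_constSet_iff G hY₀

/-- Proposition 4.2: `Ω = {(X,Y) ∈ Δ : ∃ u, Y = XA + uB ∧ 0 = XC + uE}`. -/
theorem statement7 {F : Type} [Field F] [Fintype F]
    (k n : ℕ) (G : Matrix (Fin k) (Fin n) (Polynomial F))
    (hG : ConvCode.IsMinimalEncoder F G) :
    ConvCode.Omega F G =
      {p | p ∈ ConvCode.Delta F G ∧ ∃ u : Fin k → F,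
        p.2 = p.1 ᵥ* ConvCode.matA F G + u ᵥ* ConvCode.matB F G ∧
        0 = p.1 ᵥ* ConvCode.matC F G + u ᵥ* ConvCode.matE F G} :=
  statement7_general k n G hG
end
end

section
/- Let (A,B,C,E) be the CCF of a minimal encoder G of an (n,k,δ) convolutional code C, let (Â,B̂,Ĉ,Ê) be the CCF of a minimal encoder Ĝ of the dual code Ĉ, and set Δ = {(X,Y) ∈ F^δ × F^δ : Y = XA + uB for some u ∈ F^k}, C_const = C ∩ F^n, and Ω = {(X,Y) ∈ Δ : XC + Y B^T E ∈ C_const}. Then ker(C Ê^T B̂) = Π₁(Ω) = {X ∈ F^δ : there exists u ∈ F^k with (X, XA + uB) ∈ Ω}, where Π₁(X,Y) = X. -/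
/-!
A constant codeword `XC + u'E` (with `u'` the input `u` restricted to the rows of positive
degree) is orthogonal to the rows of `Ê`, and `E Êᵀ = 0`; hence `X ∈ Π₁(Ω)` forces `X C Êᵀ = 0`.
Conversely, `E = G(0)` and `Ê = Ĝ(0)` have full row rank because the encoders are basic, and
`k + k̂ = n`, so the row space of `E` is the whole left kernel of `Êᵀ`: from `X C Êᵀ = 0` we get
`XC = vE`, the input `u = -v` cancels `vE` on the rows of positive degree, and what remains is a
constant codeword spanned by the rows of `G` of degree zero. Finally, multiplying by `B̂` only
discards the columns of `C Êᵀ` that belong to rows of `Ĝ` of degree zero, and those vanish anyway.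
-/

open Polynomial Matrix
open scoped Classical

noncomputable section

namespace Matrix

variable {K : Type*} [Field K] {m n l : Type*} [Fintype m] [Fintype n] [Fintype l]
  [DecidableEq m] [DecidableEq l]

theorem exists_vecMul_eq_of_vecMul_transpose_eq_zero
    (hcard : Fintype.card m + Fintype.card l = Fintype.card n)
    {E : Matrix m n K} {E' : Matrix l n K} {H : Matrix n m K} {H' : Matrix n l K}
    (hE : E * H = 1) (hE' : E' * H' = 1) (hEE' : E * E'ᵀ = 0)
    {w : n → K} (hw : w ᵥ* E'ᵀ = 0) : ∃ v : m → K, v ᵥ* E = w := by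
  have hinj : Function.Injective E.vecMulLinear := fun a b hab => by
    simpa [vecMul_vecMul, hE] using congrArg (· ᵥ* H) hab
  have hsurj : Function.Surjective E'ᵀ.vecMulLinear := fun y => ⟨y ᵥ* H'ᵀ, by
    change (y ᵥ* H'ᵀ) ᵥ* E'ᵀ = y
    rw [vecMul_vecMul, ← transpose_mul, hE', transpose_one, vecMul_one]⟩
  have hle : LinearMap.range E.vecMulLinear ≤ LinearMap.ker E'ᵀ.vecMulLinear := by
    rintro _ ⟨v, rfl⟩
    change (v ᵥ* E) ᵥ* E'ᵀ = 0
    rw [vecMul_vecMul, hEE', vecMul_zero]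
  have hrank := LinearMap.finrank_range_add_finrank_ker E'ᵀ.vecMulLinear
  rw [LinearMap.range_eq_top.mpr hsurj, finrank_top, Module.finrank_fintype_fun_eq_card,
    Module.finrank_fintype_fun_eq_card] at hrank
  have heq : LinearMap.range E.vecMulLinear = LinearMap.ker E'ᵀ.vecMulLinear := by
    refine Submodule.eq_of_le_of_finrank_eq hle ?_
    rw [LinearMap.finrank_range_of_inj hinj, Module.finrank_fintype_fun_eq_card]
    omega
  have hw' : w ∈ LinearMap.ker E'ᵀ.vecMulLinear := hw
  rwa [← heq] at hw'

end Matrix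

namespace ConvCode

variable {F : Type} [Field F]

theorem row_mem_code {k n : ℕ} (G : Matrix (Fin k) (Fin n) (Polynomial F)) (i : Fin k) :
    G i ∈ code F G :=
  ⟨Pi.single i 1, by simp [Matrix.row]⟩

theorem eq_C_coeff_zero_of_rowDeg_eq_zero {k n : ℕ} {G : Matrix (Fin k) (Fin n) (Polynomial F)}
    {i : Fin k} (h : rowDeg F G i = 0) (j : Fin n) : G i j = Polynomial.C ((G i j).coeff 0) :=
  Polynomial.eq_C_of_natDegree_eq_zero <|
    Nat.eq_zero_of_le_zero (h ▸ Finset.le_sup (f := fun j => (G i j).natDegree) (Finset.mem_univ j))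

theorem matE_eq_map {k n : ℕ} (G : Matrix (Fin k) (Fin n) (Polynomial F)) :
    matE F G = G.map Polynomial.constantCoeff :=
  rfl

theorem IsBasic.exists_matE_mul_eq_one {k n : ℕ} {G : Matrix (Fin k) (Fin n) (Polynomial F)}
    (hG : IsBasic F G) : ∃ H : Matrix (Fin n) (Fin k) F, matE F G * H = 1 := by
  obtain ⟨H, hH⟩ := hG
  refine ⟨H.map Polynomial.constantCoeff, ?_⟩
  rw [matE_eq_map, ← Matrix.map_mul, hH, Matrix.map_one _ (map_zero _) (map_one _)]

section Dual

variable {k kb n : ℕ} {G : Matrix (Fin k) (Fin n) (Polynomial F)}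
  {Gh : Matrix (Fin kb) (Fin n) (Polynomial F)}

theorem mul_transpose_eq_zero (hdual : code F Gh = dualCode F (code F G)) : G * Ghᵀ = 0 := by
  refine Matrix.ext fun i ih => ?_
  have h : Gh ih ∈ dualCode F (code F G) := hdual ▸ row_mem_code Gh ih
  simpa [Matrix.mul_apply, dotProduct, mul_comm] using h _ (row_mem_code G i)

theorem vecMul_transpose_eq_zero_of_mem_code (hdual : code F Gh = dualCode F (code F G))
    {v : Fin n → Polynomial F} (hv : v ∈ code F G) : v ᵥ* Ghᵀ = 0 := by
  obtain ⟨u, rfl⟩ := hv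
  rw [Matrix.vecMul_vecMul, mul_transpose_eq_zero hdual, Matrix.vecMul_zero]

theorem matE_mul_transpose_matE (hdual : code F Gh = dualCode F (code F G)) :
    matE F G * (matE F Gh)ᵀ = 0 := by
  rw [matE_eq_map, matE_eq_map, ← Matrix.transpose_map, ← Matrix.map_mul,
    mul_transpose_eq_zero hdual, Matrix.map_zero _ (map_zero _)]

theorem vecMul_transpose_matE_eq_zero_of_mem_constSet
    (hdual : code F Gh = dualCode F (code F G)) {w : Fin n → F} (hw : w ∈ constSet F G) :
    w ᵥ* (matE F Gh)ᵀ = 0 := by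
  funext ih
  calc (w ᵥ* (matE F Gh)ᵀ) ih
      = Polynomial.constantCoeff (((fun j => Polynomial.C (w j)) ᵥ* Ghᵀ) ih) := by
        rw [RingHom.map_vecMul]
        simp [Function.comp_def, matE_eq_map, Matrix.transpose_map]
    _ = 0 := by rw [vecMul_transpose_eq_zero_of_mem_code hdual hw]; simp

theorem matC_mul_transpose_matE_apply_of_rowDeg_eq_zero
    (hdual : code F Gh = dualCode F (code F G)) (s : States F G) {ih : Fin kb}
    (h : rowDeg F Gh ih = 0) : (matC F G * (matE F Gh)ᵀ) s ih = 0 := by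
  -- `Ĝ_ih` is constant, so every coefficient of `G_i Ĝ_ihᵀ = 0` is an entry of `C Êᵀ`
  have h0 := congrArg (fun p => Polynomial.coeff p ((s.2 : ℕ) + 1))
    (congrFun (congrFun (mul_transpose_eq_zero hdual) s.1) ih)
  simp only [Matrix.mul_apply, Matrix.transpose_apply, Matrix.zero_apply,
    Polynomial.finsetSum_coeff, Polynomial.coeff_zero] at h0
  rw [Matrix.mul_apply, ← h0]
  refine Finset.sum_congr rfl fun j _ => ?_
  conv_rhs => rw [eq_C_coeff_zero_of_rowDeg_eq_zero h j, Polynomial.coeff_mul_C]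
  rfl

end Dual

theorem vecMul_matE_mem_constSet_s11 {k n : ℕ} (G : Matrix (Fin k) (Fin n) (Polynomial F))
    {u : Fin k → F} (hu : ∀ i, 0 < rowDeg F G i → u i = 0) :
    u ᵥ* matE F G ∈ constSet F G := by
  refine ⟨fun i => Polynomial.C (u i), funext fun j => ?_⟩
  simp only [Matrix.vecMul, dotProduct, matE, ccfE, Matrix.of_apply, map_sum, map_mul]
  refine Finset.sum_congr rfl fun i _ => ?_
  rcases Nat.eq_zero_or_pos (rowDeg F G i) with h | h
  · rw [← eq_C_coeff_zero_of_rowDeg_eq_zero h]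
  · simp [hu i h]

section CCF

variable {k : ℕ} {d : Fin k → ℕ}

theorem ccfA_mul_transpose_ccfB : ccfA F d * (ccfB F d)ᵀ = 0 := by
  ext s i
  simp only [ccfA, ccfB, Matrix.mul_apply, Matrix.transpose_apply, Matrix.of_apply,
    Matrix.zero_apply]
  refine Finset.sum_eq_zero fun t _ => ?_
  by_cases h : (t.2 : ℕ) = 0 <;> simp [h]

theorem ccfB_mul_transpose_ccfB :
    ccfB F d * (ccfB F d)ᵀ = Matrix.diagonal fun i => if 0 < d i then 1 else 0 := by
  ext i i'
  simp only [ccfB, Matrix.mul_apply, Matrix.transpose_apply, Matrix.of_apply,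
    Matrix.diagonal_apply]
  by_cases hd : 0 < d i
  · rw [Finset.sum_eq_single ⟨i, ⟨0, hd⟩⟩]
    · by_cases hi : i = i'
      · subst hi
        simp [hd]
      · simp [hi]
    · rintro ⟨t, ν⟩ _ hne
      by_cases ht : t = i
      · subst ht
        have hν : (ν : ℕ) ≠ 0 := fun h => hne (by rw [show ν = ⟨0, hd⟩ from Fin.ext h])
        simp [hν]
      · simp [ht]
    · simp
  · refine (Finset.sum_eq_zero fun t _ => ?_).trans (by simp [hd])
    by_cases ht : t.1 = i
    · have : d t.1 = 0 := by rw [ht]; omega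
      have : ¬(t.2 : ℕ) = 0 := by have := t.2.isLt; omega
      simp [this]
    · simp [ht]

theorem vecMul_ccfB_apply (z : Fin k → F) (t : StateIdx k d) :
    (z ᵥ* ccfB F d) t = if (t.2 : ℕ) = 0 then z t.1 else 0 := by
  simp only [Matrix.vecMul, dotProduct, ccfB, Matrix.of_apply, mul_ite, mul_one, mul_zero]
  by_cases ht : (t.2 : ℕ) = 0 <;> simp [ht, eq_comm]

theorem vecMul_ccfB_eq_zero_iff {z : Fin k → F} :
    z ᵥ* ccfB F d = 0 ↔ ∀ i, 0 < d i → z i = 0 := by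
  refine ⟨fun h i hi => ?_, fun h => funext fun t => ?_⟩
  · simpa [vecMul_ccfB_apply] using congrFun h ⟨i, ⟨0, hi⟩⟩
  · rw [vecMul_ccfB_apply]
    split_ifs with ht
    · exact h _ (by omega)
    · rfl

theorem transition_vecMul_transpose_ccfB (X : StateIdx k d → F) (u : Fin k → F) :
    (X ᵥ* ccfA F d + u ᵥ* ccfB F d) ᵥ* (ccfB F d)ᵀ =
      u ᵥ* Matrix.diagonal fun i => if 0 < d i then 1 else 0 := by
  rw [Matrix.add_vecMul, Matrix.vecMul_vecMul, Matrix.vecMul_vecMul, ccfA_mul_transpose_ccfB,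
    ccfB_mul_transpose_ccfB, Matrix.vecMul_zero, zero_add]

end CCF

section Omega

variable {k n : ℕ} (G : Matrix (Fin k) (Fin n) (Polynomial F))

theorem fst_image_Omega : Prod.fst '' Omega F G =
    {X | ∃ u : Fin k → F, (X, X ᵥ* matA F G + u ᵥ* matB F G) ∈ Omega F G} := by
  ext X
  constructor
  · rintro ⟨⟨X, Y⟩, hΩ, rfl⟩
    obtain ⟨u, hY⟩ := hΩ.1
    exact ⟨u, hY ▸ hΩ⟩
  · rintro ⟨u, hu⟩
    exact ⟨_, hu, rfl⟩

theorem transition_mem_Omega_iff (X : States F G → F) (u : Fin k → F) :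
    (X, X ᵥ* matA F G + u ᵥ* matB F G) ∈ Omega F G ↔
      X ᵥ* matC F G + (u ᵥ* Matrix.diagonal fun i => if 0 < rowDeg F G i then 1 else 0) ᵥ*
        matE F G ∈ constSet F G := by
  rw [Omega, Set.mem_ofPred_eq, matA, matB, transition_vecMul_transpose_ccfB]
  exact and_iff_right ⟨u, rfl⟩

variable {kb : ℕ} {G} {Gh : Matrix (Fin kb) (Fin n) (Polynomial F)}

theorem exists_transition_mem_Omega_iff (hkn : k + kb = n) (hG : IsBasic F G)
    (hGh : IsBasic F Gh) (hdual : code F Gh = dualCode F (code F G)) (X : States F G → F) :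
    (∃ u : Fin k → F, (X, X ᵥ* matA F G + u ᵥ* matB F G) ∈ Omega F G) ↔
      X ᵥ* matC F G ᵥ* (matE F Gh)ᵀ = 0 := by
  simp_rw [transition_mem_Omega_iff]
  constructor
  · rintro ⟨u, hu⟩
    have h := vecMul_transpose_matE_eq_zero_of_mem_constSet hdual hu
    rwa [Matrix.add_vecMul, Matrix.vecMul_vecMul _ (matE F G), matE_mul_transpose_matE hdual,
      Matrix.vecMul_zero, add_zero] at h
  · intro hX
    obtain ⟨H, hH⟩ := hG.exists_matE_mul_eq_one
    obtain ⟨Hh, hHh⟩ := hGh.exists_matE_mul_eq_one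
    obtain ⟨v, hv⟩ := Matrix.exists_vecMul_eq_of_vecMul_transpose_eq_zero (by simpa using hkn)
      hH hHh (matE_mul_transpose_matE hdual) hX
    refine ⟨-v, ?_⟩
    rw [← hv, ← Matrix.add_vecMul]
    refine vecMul_matE_mem_constSet_s11 G fun i hi => ?_
    simp [Matrix.vecMul_diagonal, hi]

theorem vecMul_matC_mul_transpose_matE_mul_matB_eq_zero_iff
    (hdual : code F Gh = dualCode F (code F G)) (X : States F G → F) :
    X ᵥ* (matC F G * (matE F Gh)ᵀ * matB F Gh) = 0 ↔ X ᵥ* matC F G ᵥ* (matE F Gh)ᵀ = 0 := by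
  rw [← Matrix.vecMul_vecMul, matB, vecMul_ccfB_eq_zero_iff, Matrix.vecMul_vecMul]
  refine ⟨fun h => funext fun ih => ?_, fun h i _ => by rw [h]; rfl⟩
  rcases Nat.eq_zero_or_pos (rowDeg F Gh ih) with h0 | hpos
  · exact Finset.sum_eq_zero fun s _ =>
      mul_eq_zero_of_right _ (matC_mul_transpose_matE_apply_of_rowDeg_eq_zero hdual s h0)
  · exact h ih hpos

end Omega

end ConvCode

theorem statement11_general {F : Type} [Field F]
    (k kb n : ℕ) (hkn : k + kb = n)
    (G : Matrix (Fin k) (Fin n) (Polynomial F)) (hG : ConvCode.IsMinimalEncoder F G)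
    (Gh : Matrix (Fin kb) (Fin n) (Polynomial F)) (hGh : ConvCode.IsMinimalEncoder F Gh)
    (hdual : ConvCode.code F Gh = ConvCode.dualCode F (ConvCode.code F G)) :
    {X : ConvCode.States F G → F |
        X ᵥ* (ConvCode.matC F G * (ConvCode.matE F Gh)ᵀ * ConvCode.matB F Gh) = 0} =
      Prod.fst '' ConvCode.Omega F G ∧
    Prod.fst '' ConvCode.Omega F G =
      {X : ConvCode.States F G → F | ∃ u : Fin k → F,
        (X, X ᵥ* ConvCode.matA F G + u ᵥ* ConvCode.matB F G) ∈ ConvCode.Omega F G} := by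
  refine ⟨?_, ConvCode.fst_image_Omega G⟩
  rw [ConvCode.fst_image_Omega]
  ext X
  exact (ConvCode.vecMul_matC_mul_transpose_matE_mul_matB_eq_zero_iff hdual X).trans
    (ConvCode.exists_transition_mem_Omega_iff hkn hG.1 hGh.1 hdual X).symm

/-- Proposition 4.5(c): `ker (C Êᵀ B̂) = Π₁(Ω) = {X : ∃ u, (X, XA+uB) ∈ Ω}`. -/
theorem statement11 {F : Type} [Field F] [Fintype F]
    (k kb n : ℕ) (hkn : k + kb = n)
    (G : Matrix (Fin k) (Fin n) (Polynomial F)) (hG : ConvCode.IsMinimalEncoder F G)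
    (Gh : Matrix (Fin kb) (Fin n) (Polynomial F)) (hGh : ConvCode.IsMinimalEncoder F Gh)
    (hdual : ConvCode.code F Gh = ConvCode.dualCode F (ConvCode.code F G)) :
    {X : ConvCode.States F G → F |
        X ᵥ* (ConvCode.matC F G * (ConvCode.matE F Gh)ᵀ * ConvCode.matB F Gh) = 0} =
      Prod.fst '' ConvCode.Omega F G ∧
    Prod.fst '' ConvCode.Omega F G =
      {X : ConvCode.States F G → F | ∃ u : Fin k → F,
        (X, X ᵥ* ConvCode.matA F G + u ᵥ* ConvCode.matB F G) ∈ ConvCode.Omega F G} :=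
  statement11_general k kb n hkn G hG Gh hGh hdual
end
end
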